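/- Liouville-type uniqueness for the Dirichlet problem on a sector: Let 0 < β < 1/2. Suppose Ψ : Ω̄_β → ℝ is continuous on Ω̄_β, twice continuously differentiable on Ω_β, harmonic on Ω_β (i.e. ∂_{x₁x₁}Ψ + ∂_{x₂x₂}Ψ = 0), vanishes on ∂Ω_β, and satisfies the growth bound |Ψ(x)| ≤ C |x|² ln(e + |x|) for some constant C and all x ∈ Ω_β. Then Ψ ≡ 0. -/

import Mathlib

open Set Complex
open scoped ENNReal NNReal Real

noncomputable section

/-- The open sector `Ω_β = { r e^{iθ} : r > 0, 0 < θ < βπ }` in `ℂ ≅ ℝ²`. -/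
def Sector (β : ℝ) : Set ℂ := {z | z ≠ 0 ∧ 0 < Complex.arg z ∧ Complex.arg z < β * π}

/-- The Laplacian `ΔΨ = ∂_{x₁x₁}Ψ + ∂_{x₂x₂}Ψ` of a function `Ψ : ℂ → ℝ`. -/
def lap (Ψ : ℂ → ℝ) (z : ℂ) : ℝ :=
  fderiv ℝ (fun w => fderiv ℝ Ψ w 1) z 1 +
    fderiv ℝ (fun w => fderiv ℝ Ψ w Complex.I) z Complex.I

/-! A Phragmén–Lindelöf argument. As `β < 1/2` there is an exponent `2 < α < 1/β`, and
`v = Re (z ^ α e^{-iαβπ/2}) = ‖z‖ ^ α cos (α (arg z - βπ/2))` is harmonic on `Ω_β` with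
`v ≥ cos (αβπ/2) ‖z‖ ^ α` on `Ω̄_β`, so `v` outgrows `‖z‖² log (e + ‖z‖)`. For `ε > 0` the weak
maximum principle on `Ω_β ∩ B(0, R)`, `R` large, gives `±Ψ ≤ ε v`; let `ε → 0`. The weak maximum
principle comes from the second-derivative test: `f + δ ‖x‖²` has positive Laplacian, hence no
interior maximum. -/

open Filter InnerProductSpace Laplacian
open scoped Topology

theorem IsLocalMax.deriv_deriv_nonpos {f : ℝ → ℝ} {a : ℝ} (h : IsLocalMax f a)
    (hc : ContinuousAt f a) : deriv (deriv f) a ≤ 0 := by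
  by_contra! hpos
  have hconst : f =ᶠ[𝓝 a] fun _ => f a := by
    filter_upwards [h, isLocalMin_of_deriv_deriv_pos hpos h.deriv_eq_zero hc] with x hmax hmin
    exact le_antisymm hmax hmin
  rw [hconst.deriv.deriv_eq] at hpos
  simp at hpos

theorem IsLocalMax.fderiv_fderiv_apply_self_nonpos {E : Type*} [NormedAddCommGroup E]
    [NormedSpace ℝ E] {f : E → ℝ} {x : E} (h : IsLocalMax f x) (hf : ContDiffAt ℝ 2 f x)
    (v : E) : fderiv ℝ (fderiv ℝ f) x v v ≤ 0 := by
  set L : ℝ → E := fun t => x + t • v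
  have hL : ∀ t, HasDerivAt L v t := fun t => by
    simpa [L] using ((hasDerivAt_id t).smul_const v).const_add x
  have hL0 : L 0 = x := by simp [L]
  rw [← hL0] at h hf ⊢
  have hdiff : ∀ᶠ t in 𝓝 0, DifferentiableAt ℝ f (L t) := by
    refine (hL 0).continuousAt.tendsto.eventually ?_
    exact (hf.eventually (by simp)).mono fun y hy => hy.differentiableAt two_ne_zero
  have hderiv : deriv (f ∘ L) =ᶠ[𝓝 0] fun t => fderiv ℝ f (L t) v :=
    hdiff.mono fun t ht => (ht.hasFDerivAt.comp_hasDerivAt t (hL t)).deriv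
  have hsecond : HasDerivAt (fun t => fderiv ℝ f (L t) v)
      (fderiv ℝ (fderiv ℝ f) (L 0) v v) 0 := by
    have hf' : DifferentiableAt ℝ (fderiv ℝ f) (L 0) :=
      (hf.fderiv_right (m := 1) (by norm_num)).differentiableAt one_ne_zero
    simpa using (hf'.hasFDerivAt.comp_hasDerivAt 0 (hL 0)).clm_apply (hasDerivAt_const 0 v)
  calc fderiv ℝ (fderiv ℝ f) (L 0) v v = deriv (deriv (f ∘ L)) 0 := by
        rw [hderiv.deriv_eq, hsecond.deriv]
    _ ≤ 0 := (h.comp_continuous (hL 0).continuousAt).deriv_deriv_nonpos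
        (hf.continuousAt.comp (hL 0).continuousAt)

section Laplacian

variable {E : Type*} [NormedAddCommGroup E] [InnerProductSpace ℝ E] [FiniteDimensional ℝ E]

theorem IsLocalMax.laplacian_nonpos {f : E → ℝ} {x : E} (h : IsLocalMax f x)
    (hf : ContDiffAt ℝ 2 f x) : Δ f x ≤ 0 := by
  rw [laplacian_eq_iteratedFDeriv_stdOrthonormalBasis]
  exact Finset.sum_nonpos fun i _ => by
    simpa [iteratedFDeriv_two_apply] using h.fderiv_fderiv_apply_self_nonpos hf _

theorem laplacian_norm_sq (x : E) :
    Δ (fun y : E => ‖y‖ ^ 2) x = 2 * Module.finrank ℝ E := by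
  have h2 : fderiv ℝ (fderiv ℝ fun y : E => ‖y‖ ^ 2) x = 2 • innerSL ℝ := by
    rw [fderiv_norm_sq, ← FunLike.coe_smul]
    exact ContinuousLinearMap.fderiv _
  rw [laplacian_eq_iteratedFDeriv_stdOrthonormalBasis]
  simp only [iteratedFDeriv_two_apply, h2]
  simp [innerSL_apply_apply ℝ, mul_comm]

theorem le_of_forall_mem_frontier_le_of_laplacian_nonneg [Nontrivial E] {U : Set E}
    (hU : Bornology.IsBounded U) {f : E → ℝ} (hc : ContinuousOn f (closure U))
    (hf : ∀ x ∈ U, ContDiffAt ℝ 2 f x) (hΔ : ∀ x ∈ U, 0 ≤ Δ f x) {M : ℝ}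
    (hM : ∀ x ∈ frontier U, f x ≤ M) {x : E} (hx : x ∈ closure U) : f x ≤ M := by
  obtain ⟨r, hr⟩ := hU.subset_closedBall 0
  have hnorm : ∀ y ∈ closure U, ‖y‖ ≤ r := fun y hy => by
    simpa using closure_minimal hr Metric.isClosed_closedBall hy
  refine le_of_forall_pos_le_add fun ε hε => ?_
  set δ := ε / (r ^ 2 + 1)
  have hδ : 0 < δ := by positivity
  set N : E → ℝ := fun y => ‖y‖ ^ 2
  set g : E → ℝ := f + δ • N
  have hN : ContDiff ℝ 2 N := contDiff_norm_sq ℝ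
  obtain ⟨x₀, hx₀, hmax⟩ :=
    hU.isCompact_closure.exists_isMaxOn ⟨x, hx⟩ (hc.add (hN.continuous.const_smul δ).continuousOn)
  have hx₀U : x₀ ∈ frontier U := by
    refine ⟨hx₀, fun hint => ?_⟩
    have hloc : IsLocalMax g x₀ := Filter.mem_of_superset (isOpen_interior.mem_nhds hint)
      fun y hy => hmax (subset_closure (interior_subset hy))
    have hf₀ := hf x₀ (interior_subset hint)
    have hδN : ContDiffAt ℝ 2 (δ • N) x₀ := hN.contDiffAt.const_smul δ
    have hΔg : 0 < Δ g x₀ := by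
      rw [hf₀.laplacian_add hδN, laplacian_smul δ hN.contDiffAt, laplacian_norm_sq, smul_eq_mul]
      exact add_pos_of_nonneg_of_pos (hΔ x₀ (interior_subset hint))
        (mul_pos hδ (mul_pos two_pos (by exact_mod_cast Module.finrank_pos)))
    exact (hloc.laplacian_nonpos (hf₀.add hδN)).not_gt hΔg
  calc f x ≤ g x := by simp [g]; positivity
    _ ≤ g x₀ := hmax hx
    _ ≤ M + δ * r ^ 2 := add_le_add (hM x₀ hx₀U)
      (mul_le_mul_of_nonneg_left (pow_le_pow_left₀ (norm_nonneg _) (hnorm x₀ hx₀) 2) hδ.le)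
    _ ≤ M + ε := by
      gcongr
      rw [div_mul_eq_mul_div, div_le_iff₀ (by positivity)]
      nlinarith

end Laplacian

theorem lap_eq_laplacian {f : ℂ → ℝ} {z : ℂ} (hf : ContDiffAt ℝ 2 f z) : lap f z = Δ f z := by
  have hd : DifferentiableAt ℝ (fderiv ℝ f) z :=
    (hf.fderiv_right (m := 1) (by norm_num)).differentiableAt one_ne_zero
  simp [lap, laplacian_eq_iteratedFDeriv_complexPlane, iteratedFDeriv_two_apply,
    fderiv_clm_apply hd (differentiableAt_const _)]

theorem harmonicOnNhd_of_lap_eq_zero {U : Set ℂ} (hU : IsOpen U) {f : ℂ → ℝ}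
    (hf : ContDiffOn ℝ 2 f U) (h : ∀ z ∈ U, lap f z = 0) : HarmonicOnNhd f U := fun _ hz =>
  ⟨hf.contDiffAt (hU.mem_nhds hz), Filter.eventually_of_mem (hU.mem_nhds hz) fun w hw =>
    (lap_eq_laplacian (hf.contDiffAt (hU.mem_nhds hw))).symm.trans (h w hw)⟩

theorem isLittleO_mul_sq_mul_log_rpow (C : ℝ) {α : ℝ} (hα : 2 < α) :
    (fun R : ℝ => C * R ^ 2 * Real.log (Real.exp 1 + R)) =o[atTop] fun R => R ^ α := by
  have hs : 0 < α - 2 := by linarith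
  have hshift : (fun R : ℝ => (Real.exp 1 + R) ^ (α - 2)) =O[atTop] fun R => R ^ (α - 2) := by
    refine Asymptotics.IsBigO.of_bound (2 ^ (α - 2)) ?_
    filter_upwards [eventually_ge_atTop (Real.exp 1)] with R hR
    have hR0 : 0 ≤ R := (Real.exp_pos 1).le.trans hR
    rw [Real.norm_of_nonneg (by positivity), Real.norm_of_nonneg (by positivity),
      ← Real.mul_rpow (by norm_num) hR0]
    exact Real.rpow_le_rpow (by positivity) (by linarith) hs.le
  have hlog : (fun R : ℝ => Real.log (Real.exp 1 + R)) =o[atTop] fun R => R ^ (α - 2) :=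
    ((isLittleO_log_rpow_atTop hs).comp_tendsto
      (tendsto_atTop_add_const_left _ _ tendsto_id)).trans_isBigO hshift
  refine ((Asymptotics.isBigO_refl (fun R : ℝ => R ^ 2) atTop).const_mul_left C
    |>.mul_isLittleO hlog).congr' (by filter_upwards with R; ring) ?_
  filter_upwards [eventually_gt_atTop 0] with R hR
  rw [← Real.rpow_natCast, ← Real.rpow_add hR]
  norm_num

section SectorBarrier

variable {α β : ℝ}

theorem re_pos_of_mem_sector (hβ : β ≤ 1 / 2) {z : ℂ} (hz : z ∈ Sector β) : 0 < z.re := by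
  refine (abs_arg_lt_pi_div_two_iff.1 ?_).resolve_right hz.1
  rw [abs_of_pos hz.2.1]
  nlinarith [Real.pi_pos, hz.2.2]

theorem sector_subset_slitPlane (hβ : β ≤ 1 / 2) : Sector β ⊆ slitPlane := fun _ hz =>
  Or.inl (re_pos_of_mem_sector hβ hz)

theorem isOpen_sector (hβ : β ≤ 1 / 2) : IsOpen (Sector β) := by
  have : Sector β = slitPlane ∩ arg ⁻¹' Ioo 0 (β * π) := by
    ext z
    exact ⟨fun hz => ⟨sector_subset_slitPlane hβ hz, hz.2⟩,
      fun hz => ⟨slitPlane_ne_zero hz.1, hz.2⟩⟩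
  rw [this]
  exact continuousOn_arg.isOpen_inter_preimage isOpen_slitPlane isOpen_Ioo

theorem re_nonneg_of_mem_closure_sector (hβ : β ≤ 1 / 2) {z : ℂ} (hz : z ∈ closure (Sector β)) :
    0 ≤ z.re :=
  closure_minimal (fun _ hw => (re_pos_of_mem_sector hβ hw).le)
    (isClosed_le continuous_const continuous_re) hz

def sectorBarrier (α β : ℝ) (z : ℂ) : ℝ :=
  (z ^ (α : ℂ) * exp (↑(-(α * β * π / 2)) * I)).re

theorem sectorBarrier_eq (α β : ℝ) {z : ℂ} (hz : z ≠ 0) :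
    sectorBarrier α β z = ‖z‖ ^ α * Real.cos (α * arg z - α * β * π / 2) := by
  rw [sectorBarrier, cpow_def_of_ne_zero hz, ← Complex.exp_add, exp_re,
    Real.rpow_def_of_pos (norm_pos_iff.2 hz)]
  simp [log_re, log_im, sub_eq_add_neg, mul_comm]

theorem harmonicOnNhd_sectorBarrier (α β : ℝ) : HarmonicOnNhd (sectorBarrier α β) slitPlane :=
  fun _ hz => ((analyticAt_id.cpow analyticAt_const hz).mul analyticAt_const).harmonicAt_re

theorem continuousOn_sectorBarrier (hβ : β ≤ 1 / 2) (hα : 0 < α) :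
    ContinuousOn (sectorBarrier α β) (closure (Sector β)) := fun _ hz =>
  (continuous_re.continuousAt.comp ((continuousAt_cpow_const_of_re_pos
    (Or.inl (re_nonneg_of_mem_closure_sector hβ hz)) (by simpa)).mul
      continuousAt_const)).continuousWithinAt

theorem cos_mul_rpow_le_sectorBarrier (hβ : β ≤ 1 / 2) (hα : 0 < α) (hαβ : α * β < 1) {z : ℂ}
    (hz : z ∈ closure (Sector β)) :
    Real.cos (α * β * π / 2) * ‖z‖ ^ α ≤ sectorBarrier α β z := by
  refine le_on_closure (fun w hw => ?_)
    (continuous_const.mul (continuous_norm.rpow_const fun _ => Or.inr hα.le)).continuousOn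
    (continuousOn_sectorBarrier hβ hα) hz
  obtain ⟨hw0, harg0, hargβ⟩ := hw
  rw [sectorBarrier_eq α β hw0, mul_comm]
  refine mul_le_mul_of_nonneg_left ?_ (by positivity)
  rw [← Real.cos_abs (α * arg w - _)]
  exact Real.cos_le_cos_of_nonneg_of_le_pi (abs_nonneg _) (by nlinarith [Real.pi_pos])
    (abs_le.2 ⟨by nlinarith, by nlinarith⟩)

theorem InnerProductSpace.HarmonicOnNhd.nonpos_of_mem_sector {u : ℂ → ℝ}
    (hu : HarmonicOnNhd u (Sector β)) (hβ : β ≤ 1 / 2) (hα : 0 < α) (hαβ : α * β < 1) (hc : ContinuousOn u (closure (Sector β)))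
    (hbd : ∀ z ∈ frontier (Sector β), u z ≤ 0)
    (hgrowth : ∀ ε > 0, ∃ᶠ R in atTop, ∀ z ∈ Sector β, ‖z‖ = R → u z ≤ ε * R ^ α)
    {z₀ : ℂ} (hz₀ : z₀ ∈ Sector β) : u z₀ ≤ 0 := by
  set v := sectorBarrier α β
  set c := Real.cos (α * β * π / 2)
  have hβ0 : 0 < β := (mul_pos_iff_of_pos_right Real.pi_pos).1 (hz₀.2.1.trans hz₀.2.2)
  have hαβ0 : 0 < α * β := mul_pos hα hβ0
  have hc₀ : 0 < c :=
    Real.cos_pos_of_mem_Ioo ⟨by nlinarith [Real.pi_pos], by nlinarith [Real.pi_pos]⟩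
  have hv0 : ∀ z ∈ closure (Sector β), 0 ≤ v z := fun z hz =>
    (by positivity : 0 ≤ c * ‖z‖ ^ α).trans (cos_mul_rpow_le_sectorBarrier hβ hα hαβ hz)
  have hS := isOpen_sector hβ
  have hw : ∀ ε : ℝ, HarmonicOnNhd (u - ε • v) (Sector β) := fun ε =>
    hu.sub ((harmonicOnNhd_sectorBarrier α β).mono (sector_subset_slitPlane hβ)).const_smul
  refine ge_of_tendsto (x := 𝓝[>] 0) (f := fun ε => ε * v z₀) ?_ ?_
  · exact ((continuous_mul_const (v z₀)).tendsto' 0 0 (zero_mul _)).mono_left nhdsWithin_le_nhds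
  filter_upwards [self_mem_nhdsWithin] with ε (hε : 0 < ε)
  obtain ⟨R, hR, hz₀R⟩ :=
    ((hgrowth (ε * c) (by positivity)).and_eventually (eventually_gt_atTop ‖z₀‖)).exists
  have hfront : ∀ z ∈ frontier (Sector β), u z - ε * v z ≤ 0 := fun z hz =>
    sub_nonpos.2 ((hbd z hz).trans (mul_nonneg hε.le (hv0 z (frontier_subset_closure hz))))
  have hV : Sector β ∩ Metric.ball 0 R ⊆ Sector β := inter_subset_left
  refine sub_nonpos.1 (le_of_forall_mem_frontier_le_of_laplacian_nonneg (f := u - ε • v)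
    (Metric.isBounded_ball.subset inter_subset_right)
    (hc.mono (closure_mono hV) |>.sub ((continuousOn_sectorBarrier hβ hα).mono
      (closure_mono hV) |>.const_smul ε))
    (fun z hz => (hw ε z (hV hz)).1) (fun z hz => (hw ε z (hV hz)).2.self_of_nhds.ge) ?_
    (subset_closure ⟨hz₀, by simpa using hz₀R⟩))
  intro z hz
  simp only [Pi.sub_apply, Pi.smul_apply, smul_eq_mul]
  rcases frontier_inter_subset _ _ hz with ⟨hzS, -⟩ | ⟨hzS, hzR⟩
  · exact hfront z hzS
  by_cases hzS' : z ∈ Sector β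
  · have hnorm : ‖z‖ = R := by simpa using Metric.frontier_ball_subset_sphere hzR
    have := cos_mul_rpow_le_sectorBarrier hβ hα hαβ hzS
    rw [hnorm] at this
    nlinarith [hR z hzS' hnorm]
  · exact hfront z (hS.frontier_eq ▸ ⟨hzS, hzS'⟩)

end SectorBarrier

theorem sector_dirichlet_liouville (β : ℝ) (hβ0 : 0 < β) (hβ : β < 1/2)
    (Ψ : ℂ → ℝ) (C : ℝ)
    (hcont : ContinuousOn Ψ (closure (Sector β)))
    (hC2 : ContDiffOn ℝ 2 Ψ (Sector β))
    (hharm : ∀ z ∈ Sector β, lap Ψ z = 0)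
    (hbc : ∀ z ∈ frontier (Sector β), Ψ z = 0)
    (hgrowth : ∀ z ∈ Sector β, |Ψ z| ≤ C * ‖z‖ ^ 2 * Real.log (Real.exp 1 + ‖z‖)) :
    ∀ z ∈ closure (Sector β), Ψ z = 0 := by
  have hS := isOpen_sector hβ.le
  have hΨ : HarmonicOnNhd Ψ (Sector β) := harmonicOnNhd_of_lap_eq_zero hS hC2 hharm
  obtain ⟨α, hα, hαβ⟩ := exists_between ((lt_div_iff₀ hβ0).2 (by linarith) : 2 < 1 / β)
  replace hαβ : α * β < 1 := (lt_div_iff₀ hβ0).1 hαβ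
  have hgrowth' : ∀ ε > 0, ∃ᶠ R in atTop, ∀ z ∈ Sector β, ‖z‖ = R → |Ψ z| ≤ ε * R ^ α :=
    fun ε hε => ((isLittleO_mul_sq_mul_log_rpow C hα).def hε).frequently.mono
      fun R hR z hz hzR => by
        subst hzR
        refine (hgrowth z hz).trans ((le_abs_self _).trans (hR.trans_eq ?_))
        rw [Real.norm_of_nonneg (by positivity)]
  have hle : ∀ z ∈ Sector β, Ψ z ≤ 0 := fun z hz =>
    hΨ.nonpos_of_mem_sector hβ.le (by linarith) hαβ hcont (fun z hz => (hbc z hz).le)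
      (fun ε hε => (hgrowth' ε hε).mono fun R hR z hz hzR => (le_abs_self _).trans (hR z hz hzR)) hz
  have hge : ∀ z ∈ Sector β, -Ψ z ≤ 0 := fun z hz =>
    hΨ.neg.nonpos_of_mem_sector hβ.le (by linarith) hαβ hcont.neg
      (fun z hz => by simp [hbc z hz])
      (fun ε hε => (hgrowth' ε hε).mono fun R hR z hz hzR => (neg_le_abs _).trans (hR z hz hzR)) hz
  intro z hz
  by_cases hzS : z ∈ Sector β
  · linarith [hle z hzS, hge z hzS]
  · exact hbc z (hS.frontier_eq ▸ ⟨hz, hzS⟩)
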